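/- Let n ≥ 2, z : Fin n → ℝ, y : Fin n with z y = max_i z i, and β ≥ 0. Define γ_y = ((∑_{i ≠ y} exp (β (z i))) · (∑_i exp (z i))) / ((∑_i exp (β (z i))) · (∑_{i ≠ y} exp (z i))). Then γ_y ≥ ((n - 1) · exp(β m) / (exp(β (z y)) + (n - 1) · exp(β M'))) · ((exp (z y) + (n - 1) · exp m) / ((n - 1) · exp M')), where m = min_i z i and M' = max_{i ≠ y} z i. -/
import Mathlib


open Real Finset

/-- Intermediate lower bound on the true-class gradient rescaling factor `γ_y`:
`γ_y ≥ ((n-1)·exp(β m) / (exp(β z y) + (n-1)·exp(β M'))) · ((exp(z y) + (n-1)·exp m) / ((n-1)·exp M'))`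
where `m = min_i z i` and `M' = max_{i ≠ y} z i`. -/
theorem gamma_true_class_lower_bound_intermediate (n : ℕ) (hn : 2 ≤ n) (z : Fin n → ℝ)
    (y : Fin n) (hy : z y = Finset.univ.sup' (Finset.univ_nonempty_iff.mpr ⟨y⟩) z)
    (β : ℝ) (hβ : 0 ≤ β) (γ m M' : ℝ)
    (hγ : γ = ((∑ i ∈ Finset.univ.erase y, Real.exp (β * z i)) * ∑ i, Real.exp (z i)) /
      ((∑ i, Real.exp (β * z i)) * ∑ i ∈ Finset.univ.erase y, Real.exp (z i)))
    (hm : m = Finset.univ.inf' (Finset.univ_nonempty_iff.mpr ⟨y⟩) z)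
    (hM' : M' = (Finset.univ.erase y).sup'
      (by rw [← Finset.card_pos, Finset.card_erase_of_mem (Finset.mem_univ y),
        Finset.card_univ, Fintype.card_fin]; omega) z) :
    γ ≥ (((n : ℝ) - 1) * Real.exp (β * m) /
          (Real.exp (β * z y) + ((n : ℝ) - 1) * Real.exp (β * M'))) *
        ((Real.exp (z y) + ((n : ℝ) - 1) * Real.exp m) / (((n : ℝ) - 1) * Real.exp M')) := by
  have hne : (Finset.univ.erase y).Nonempty := by
    rw [← Finset.card_pos, Finset.card_erase_of_mem (Finset.mem_univ y),
      Finset.card_univ, Fintype.card_fin]; omega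
  have h1n : 1 ≤ n := by omega
  have hcard : ((Finset.univ.erase y).card : ℝ) = (n : ℝ) - 1 := by
    rw [Finset.card_erase_of_mem (Finset.mem_univ y), Finset.card_univ, Fintype.card_fin,
      Nat.cast_sub h1n, Nat.cast_one]
  have hnpos : (0:ℝ) < (n : ℝ) - 1 := by
    have : (2:ℝ) ≤ (n:ℝ) := by exact_mod_cast hn
    linarith
  have hmle : ∀ i : Fin n, m ≤ z i := fun i => by
    rw [hm]; exact Finset.inf'_le _ (Finset.mem_univ i)
  have hM'le : ∀ i ∈ Finset.univ.erase y, z i ≤ M' := fun i hi => by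
    rw [hM']; exact Finset.le_sup' _ hi
  have hA : ((n:ℝ) - 1) * Real.exp (β * m) ≤ ∑ i ∈ Finset.univ.erase y, Real.exp (β * z i) := by
    calc ((n:ℝ) - 1) * Real.exp (β * m)
        = ∑ _i ∈ Finset.univ.erase y, Real.exp (β * m) := by
          rw [Finset.sum_const, nsmul_eq_mul, hcard]
      _ ≤ _ := Finset.sum_le_sum fun i _ =>
          Real.exp_le_exp.2 (mul_le_mul_of_nonneg_left (hmle i) hβ)
  have hAm : ((n:ℝ) - 1) * Real.exp m ≤ ∑ i ∈ Finset.univ.erase y, Real.exp (z i) := by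
    calc ((n:ℝ) - 1) * Real.exp m
        = ∑ _i ∈ Finset.univ.erase y, Real.exp m := by
          rw [Finset.sum_const, nsmul_eq_mul, hcard]
      _ ≤ _ := Finset.sum_le_sum fun i _ => Real.exp_le_exp.2 (hmle i)
  have hsplitβ : (∑ i, Real.exp (β * z i))
      = Real.exp (β * z y) + ∑ i ∈ Finset.univ.erase y, Real.exp (β * z i) :=
    (Finset.add_sum_erase _ _ (Finset.mem_univ y)).symm
  have hsplit : (∑ i, Real.exp (z i))
      = Real.exp (z y) + ∑ i ∈ Finset.univ.erase y, Real.exp (z i) :=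
    (Finset.add_sum_erase _ _ (Finset.mem_univ y)).symm
  have hB : Real.exp (z y) + ((n:ℝ) - 1) * Real.exp m ≤ ∑ i, Real.exp (z i) := by
    rw [hsplit]; linarith
  have hC : (∑ i, Real.exp (β * z i)) ≤ Real.exp (β * z y) + ((n:ℝ) - 1) * Real.exp (β * M') := by
    rw [hsplitβ]
    have : (∑ i ∈ Finset.univ.erase y, Real.exp (β * z i))
        ≤ ((n:ℝ) - 1) * Real.exp (β * M') := by
      calc (∑ i ∈ Finset.univ.erase y, Real.exp (β * z i))
          ≤ ∑ _i ∈ Finset.univ.erase y, Real.exp (β * M') := Finset.sum_le_sum fun i hi =>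
            Real.exp_le_exp.2 (mul_le_mul_of_nonneg_left (hM'le i hi) hβ)
        _ = _ := by rw [Finset.sum_const, nsmul_eq_mul, hcard]
    linarith
  have hD : (∑ i ∈ Finset.univ.erase y, Real.exp (z i)) ≤ ((n:ℝ) - 1) * Real.exp M' := by
    calc (∑ i ∈ Finset.univ.erase y, Real.exp (z i))
        ≤ ∑ _i ∈ Finset.univ.erase y, Real.exp M' := Finset.sum_le_sum fun i hi =>
          Real.exp_le_exp.2 (hM'le i hi)
      _ = _ := by rw [Finset.sum_const, nsmul_eq_mul, hcard]
  have hCpos : 0 < ∑ i, Real.exp (β * z i) :=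
    Finset.sum_pos (fun i _ => Real.exp_pos _) ⟨y, Finset.mem_univ y⟩
  have hDpos : 0 < ∑ i ∈ Finset.univ.erase y, Real.exp (z i) :=
    Finset.sum_pos (fun i _ => Real.exp_pos _) hne
  rw [hγ, ge_iff_le, div_mul_div_comm]
  apply div_le_div₀ (by positivity)
  · apply mul_le_mul hA hB (by positivity)
    exact le_trans (by positivity) hA
  · exact mul_pos hCpos hDpos
  · exact mul_le_mul hC hD hDpos.le (by positivity)
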